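/- arXiv:2306.03788 — 5 statements merged into one kernel-verified Lean document; each statement's English description precedes it below -/
import Mathlib

section
/- Let θ > 0, k ≥ 2 an integer, and f₁ ≥ ⋯ ≥ f_k ≥ 0 with (k−1) f_k + 2θ − Σᵢ₌₁^{k−1} fᵢ ≤ 0. If (w₁,…,w_k) ∈ [0,1]^k with Σᵢ wᵢ ≤ 1 maximizes Σᵢ (wᵢ fᵢ − θ wᵢ²) over that constraint set, then w_k = 0. More precisely, for any feasible (w̃₁,…,w̃_k), setting w_k = 0 and wᵢ = w̃ᵢ + w̃_k/(k−1) for i < k yields Σᵢ (wᵢ fᵢ − θ wᵢ²) ≥ Σᵢ (w̃ᵢ fᵢ − θ w̃ᵢ²) + θ w̃_k². -/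
/-!
Moving the mass `w̃ₖ` of the last coordinate evenly, `c = w̃ₖ / (k-1)` each, onto the first
`k - 1` coordinates changes the objective by
`c (∑_{i<k} fᵢ - (k-1) fₖ) - 2θc ∑_{i<k} w̃ᵢ - (k-1)θc² + θ w̃ₖ²`.
The hypothesis bounds the first term below by `2θc`, and `∑_{i<k} w̃ᵢ + (k-1)c ≤ 1` makes
`2θc (1 - ∑_{i<k} w̃ᵢ) - (k-1)θc²` nonnegative, so the gain is at least `θ w̃ₖ²`.
A maximizer therefore has `θ wₖ² ≤ 0`.
-/

open Finset

noncomputable section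

def quadObjective (θ : ℝ) (f w : ℕ → ℝ) (n : ℕ) : ℝ :=
  ∑ i ∈ range n, (w i * f i - θ * w i ^ 2)

def spreadLast (m : ℕ) (w : ℕ → ℝ) : ℕ → ℝ :=
  fun i => if i < m then w i + w m / m else 0

lemma quadObjective_add_const (θ c : ℝ) (f w v : ℕ → ℝ) (n : ℕ)
    (hv : ∀ i < n, v i = w i + c) :
    quadObjective θ f v n = quadObjective θ f w n + c * ∑ i ∈ range n, f i
      - 2 * θ * c * ∑ i ∈ range n, w i - n * θ * c ^ 2 := by
  unfold quadObjective
  calc ∑ i ∈ range n, (v i * f i - θ * v i ^ 2)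
      = ∑ i ∈ range n,
          ((w i * f i - θ * w i ^ 2) + (c * f i - 2 * θ * c * w i - θ * c ^ 2)) :=
        sum_congr rfl fun i hi => by rw [hv i (mem_range.mp hi)]; ring
    _ = _ := by
        simp only [sum_add_distrib, sum_sub_distrib, ← mul_sum, sum_const, card_range,
          nsmul_eq_mul]
        ring

lemma quadObjective_add_sq_le_of_spread {θ : ℝ} (hθ : 0 ≤ θ) {m : ℕ} (hm : 0 < m)
    {f : ℕ → ℝ} (hcond : m * f m + 2 * θ ≤ ∑ i ∈ range m, f i)
    {wt w : ℕ → ℝ} (hwt : 0 ≤ wt m) (hsum : ∑ i ∈ range (m + 1), wt i ≤ 1)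
    (hw : ∀ i < m, w i = wt i + wt m / m) (hwm : w m = 0) :
    quadObjective θ f wt (m + 1) + θ * wt m ^ 2 ≤ quadObjective θ f w (m + 1) := by
  have hm' : (0 : ℝ) < m := by exact_mod_cast hm
  set c := wt m / m
  have hc : 0 ≤ c := by positivity
  have hwtc : wt m = m * c := (mul_div_cancel₀ _ hm'.ne').symm
  have hshift := quadObjective_add_const θ c f wt w m hw
  simp only [quadObjective, sum_range_succ, hwm] at hshift hsum ⊢
  rw [hshift, hwtc]
  set W := ∑ i ∈ range m, wt i
  have hslack : 0 ≤ 2 * (1 - W - m * c) + m * c := by linarith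
  linarith [mul_nonneg hc (sub_nonneg.mpr hcond), mul_nonneg (mul_nonneg hθ hc) hslack]

lemma spreadLast_lt {m i : ℕ} (w : ℕ → ℝ) (hi : i < m) :
    spreadLast m w i = w i + w m / m := if_pos hi

lemma spreadLast_of_le {m i : ℕ} (w : ℕ → ℝ) (hi : m ≤ i) : spreadLast m w i = 0 :=
  if_neg hi.not_gt

lemma sum_spreadLast {m : ℕ} (hm : m ≠ 0) (w : ℕ → ℝ) :
    ∑ i ∈ range (m + 1), spreadLast m w i = ∑ i ∈ range (m + 1), w i := by
  rw [sum_range_succ, sum_range_succ, spreadLast_of_le w le_rfl,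
    sum_congr rfl fun i hi => spreadLast_lt w (mem_range.mp hi), sum_add_distrib, sum_const,
    card_range, nsmul_eq_mul, mul_div_cancel₀ _ (Nat.cast_ne_zero.mpr hm), add_zero]

lemma spreadLast_nonneg {m : ℕ} {w : ℕ → ℝ} (hw : ∀ i < m + 1, 0 ≤ w i) (i : ℕ) :
    0 ≤ spreadLast m w i := by
  unfold spreadLast
  split_ifs with hi
  · have := hw i (by omega)
    have := hw m (by omega)
    positivity
  · exact le_rfl

lemma spreadLast_mem_Icc {m : ℕ} (hm : m ≠ 0) {w : ℕ → ℝ} (hw : ∀ i < m + 1, 0 ≤ w i)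
    (hsum : ∑ i ∈ range (m + 1), w i ≤ 1) (i : ℕ) (hi : i < m + 1) :
    spreadLast m w i ∈ Set.Icc (0 : ℝ) 1 := by
  refine ⟨spreadLast_nonneg hw i, ?_⟩
  calc spreadLast m w i ≤ ∑ j ∈ range (m + 1), spreadLast m w j :=
        single_le_sum (fun j _ => spreadLast_nonneg hw j) (mem_range.mpr hi)
    _ ≤ 1 := by rwa [sum_spreadLast hm]

end

theorem stmt3_general (θ : ℝ) (hθ : 0 < θ) (k : ℕ) (hk : 2 ≤ k)
    (f : ℕ → ℝ)
    (hcond : ((k : ℝ) - 1) * f (k - 1) + 2 * θ - ∑ i ∈ Finset.range (k - 1), f i ≤ 0) :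
    (∀ wt : ℕ → ℝ, (∀ i < k, wt i ∈ Set.Icc (0 : ℝ) 1) →
      ∑ i ∈ Finset.range k, wt i ≤ 1 →
      ∀ w : ℕ → ℝ, w (k - 1) = 0 →
        (∀ i < k - 1, w i = wt i + wt (k - 1) / ((k : ℝ) - 1)) →
        ∑ i ∈ Finset.range k, (wt i * f i - θ * (wt i) ^ 2) + θ * (wt (k - 1)) ^ 2
          ≤ ∑ i ∈ Finset.range k, (w i * f i - θ * (w i) ^ 2)) ∧
    (∀ w : ℕ → ℝ, (∀ i < k, w i ∈ Set.Icc (0 : ℝ) 1) →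
      ∑ i ∈ Finset.range k, w i ≤ 1 →
      (∀ v : ℕ → ℝ, (∀ i < k, v i ∈ Set.Icc (0 : ℝ) 1) →
        ∑ i ∈ Finset.range k, v i ≤ 1 →
        ∑ i ∈ Finset.range k, (v i * f i - θ * (v i) ^ 2)
          ≤ ∑ i ∈ Finset.range k, (w i * f i - θ * (w i) ^ 2)) →
      w (k - 1) = 0) := by
  obtain ⟨m, rfl⟩ : ∃ m, k = m + 1 := ⟨k - 1, by omega⟩
  have hm : m ≠ 0 := by omega
  have hcast : ((m + 1 : ℕ) : ℝ) - 1 = m := by push_cast; ring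
  simp only [Nat.add_sub_cancel, hcast] at hcond ⊢
  have hcond' : m * f m + 2 * θ ≤ ∑ i ∈ range m, f i := by linarith
  have gain : ∀ wt : ℕ → ℝ, (∀ i < m + 1, wt i ∈ Set.Icc (0 : ℝ) 1) →
      ∑ i ∈ range (m + 1), wt i ≤ 1 → ∀ w : ℕ → ℝ, w m = 0 →
      (∀ i < m, w i = wt i + wt m / m) →
      quadObjective θ f wt (m + 1) + θ * wt m ^ 2 ≤ quadObjective θ f w (m + 1) :=
    fun wt hwt hsum w hwm hw =>
      quadObjective_add_sq_le_of_spread hθ.le (Nat.pos_of_ne_zero hm) hcond' (hwt m (by omega)).1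
        hsum hw hwm
  refine ⟨gain, fun w hw hsum hmax => ?_⟩
  have hw0 : ∀ i < m + 1, 0 ≤ w i := fun i hi => (hw i hi).1
  have hspread := gain w hw hsum (spreadLast m w) (spreadLast_of_le w le_rfl)
    fun i hi => spreadLast_lt w hi
  have hle := hmax (spreadLast m w) (spreadLast_mem_Icc hm hw0 hsum)
    (by rwa [sum_spreadLast hm])
  have hsq : θ * w m ^ 2 ≤ 0 := by unfold quadObjective at hspread; linarith
  exact pow_eq_zero_iff two_ne_zero |>.mp
    (le_antisymm (nonpos_of_mul_nonpos_right hsq hθ) (sq_nonneg _))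

/-- Let `k ≥ 2`, `f₁ ≥ ⋯ ≥ f_k ≥ 0` with
`(k−1) f_k + 2θ − ∑_{i<k} fᵢ ≤ 0`.  Any maximizer of `∑ (wᵢ fᵢ − θ wᵢ²)` over
`{w ∈ [0,1]^k : ∑ wᵢ ≤ 1}` has `w_k = 0`; more precisely, redistributing
`w̃_k` evenly over the first `k−1` coordinates improves the value by at least
`θ w̃_k²`.  (Indices `0,…,k−1`; `f (k-1)` is the last value.) -/
theorem stmt3 (θ : ℝ) (hθ : 0 < θ) (k : ℕ) (hk : 2 ≤ k)
    (f : ℕ → ℝ) (hmono : ∀ i j, i ≤ j → j < k → f j ≤ f i)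
    (hf0 : ∀ i < k, 0 ≤ f i)
    (hcond : ((k : ℝ) - 1) * f (k - 1) + 2 * θ - ∑ i ∈ Finset.range (k - 1), f i ≤ 0) :
    (∀ wt : ℕ → ℝ, (∀ i < k, wt i ∈ Set.Icc (0 : ℝ) 1) →
      ∑ i ∈ Finset.range k, wt i ≤ 1 →
      ∀ w : ℕ → ℝ, w (k - 1) = 0 →
        (∀ i < k - 1, w i = wt i + wt (k - 1) / ((k : ℝ) - 1)) →
        ∑ i ∈ Finset.range k, (wt i * f i - θ * (wt i) ^ 2) + θ * (wt (k - 1)) ^ 2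
          ≤ ∑ i ∈ Finset.range k, (w i * f i - θ * (w i) ^ 2)) ∧
    (∀ w : ℕ → ℝ, (∀ i < k, w i ∈ Set.Icc (0 : ℝ) 1) →
      ∑ i ∈ Finset.range k, w i ≤ 1 →
      (∀ v : ℕ → ℝ, (∀ i < k, v i ∈ Set.Icc (0 : ℝ) 1) →
        ∑ i ∈ Finset.range k, v i ≤ 1 →
        ∑ i ∈ Finset.range k, (v i * f i - θ * (v i) ^ 2)
          ≤ ∑ i ∈ Finset.range k, (w i * f i - θ * (w i) ^ 2)) →
      w (k - 1) = 0) :=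
  stmt3_general θ hθ k hk f hcond
end

section
/- Let θ > 0, k ∈ ℕ, f₁ ≥ ⋯ ≥ f_k > 0 with Σᵢ fᵢ ≥ 2θ. Define k⋆ = min( {j ∈ {1,…,k−1} : j·f_{j+1} ≤ Σᵢ₌₁^j fᵢ − 2θ} ∪ {k} ). Then setting wᵢ = (1/(2θ))[fᵢ − (1/k⋆)(Σⱼ₌₁^{k⋆} fⱼ − 2θ)] for i ≤ k⋆ and wᵢ = 0 for i > k⋆, one has wᵢ > 0 for i ≤ k⋆ and w₁ + ⋯ + w_{k⋆} = 1. -/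
/-- Case `∑ fᵢ ≥ 2θ`: with
`k⋆ = min({j ∈ {1,…,k−1} : j f_{j+1} ≤ ∑_{i≤j} fᵢ − 2θ} ∪ {k})`
and `wᵢ = (1/2θ)[fᵢ − (1/k⋆)(∑_{j<k⋆} fⱼ − 2θ)]` for `i < k⋆`, `wᵢ = 0`
otherwise, one has `wᵢ > 0` for `i < k⋆` and `∑_{i<k⋆} wᵢ = 1`.
(0-based indices: the 1-based `f_{j+1}` is `f j`.) -/
theorem stmt5 (θ : ℝ) (hθ : 0 < θ) (k : ℕ) (hk : 0 < k)
    (f : ℕ → ℝ) (hmono : ∀ i j, i ≤ j → j < k → f j ≤ f i)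
    (hfpos : ∀ i < k, 0 < f i)
    (hsum : 2 * θ ≤ ∑ i ∈ Finset.range k, f i)
    (kstar : ℕ)
    (hkstar : kstar = sInf ({j | 1 ≤ j ∧ j < k ∧
        (j : ℝ) * f j ≤ (∑ i ∈ Finset.range j, f i) - 2 * θ} ∪ {k}))
    (w : ℕ → ℝ)
    (hw : ∀ i, w i = if i < kstar then
        (1 / (2 * θ)) * (f i - (1 / (kstar : ℝ)) *
          ((∑ j ∈ Finset.range kstar, f j) - 2 * θ))
      else 0) :
    (∀ i < kstar, 0 < w i) ∧ ∑ i ∈ Finset.range kstar, w i = 1 := by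
  set S : Set ℕ := {j | 1 ≤ j ∧ j < k ∧
        (j : ℝ) * f j ≤ (∑ i ∈ Finset.range j, f i) - 2 * θ} ∪ {k} with hS
  have hkS : k ∈ S := Or.inr rfl
  have hmem : kstar ∈ S := hkstar ▸ Nat.sInf_mem ⟨k, hkS⟩
  have hle : kstar ≤ k := hkstar ▸ Nat.sInf_le hkS
  have h1 : 1 ≤ kstar := by
    rcases hmem with ⟨h, _⟩ | h
    · exact h
    · simp only [Set.mem_singleton_iff] at h; omega
  have hkpos : (0:ℝ) < (kstar : ℝ) := by exact_mod_cast h1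
  have hθ2 : (0:ℝ) < 2 * θ := by linarith
  set m := kstar - 1 with hm
  have hmlt : m < k := by omega
  have hsplit : ∑ i ∈ Finset.range kstar, f i = (∑ i ∈ Finset.range m, f i) + f m := by
    have : kstar = m + 1 := by omega
    rw [this, Finset.sum_range_succ]
  have key : (∑ i ∈ Finset.range kstar, f i) - 2 * θ < (kstar : ℝ) * f m := by
    have hcast : (kstar : ℝ) = (m : ℝ) + 1 := by
      have : kstar = m + 1 := by omega
      rw [this]; push_cast; ring
    rcases Nat.eq_zero_or_pos m with h0 | hpos
    · rw [hsplit, h0]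
      simp only [Finset.range_zero, Finset.sum_empty, zero_add]
      rw [hcast, h0]
      push_cast
      have := hfpos 0 hk
      nlinarith
    · have hnot : m ∉ S := by
        intro hmem'
        have := Nat.sInf_le hmem'
        omega
      have hgt : (∑ i ∈ Finset.range m, f i) - 2 * θ < (m : ℝ) * f m := by
        by_contra hc
        push_neg at hc
        exact hnot (Or.inl ⟨hpos, hmlt, hc⟩)
      rw [hsplit, hcast]
      nlinarith
  have hpos : ∀ i < kstar, 0 < w i := by
    intro i hi
    rw [hw i, if_pos hi]
    have hfm : f m ≤ f i := hmono i m (by omega) hmlt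
    have : (1 / (kstar : ℝ)) * ((∑ j ∈ Finset.range kstar, f j) - 2 * θ) < f i := by
      rw [div_mul_eq_mul_div, one_mul, div_lt_iff₀ hkpos]
      nlinarith
    exact mul_pos (by positivity) (by linarith)
  refine ⟨hpos, ?_⟩
  have hcongr : ∀ i ∈ Finset.range kstar, w i =
      (1 / (2 * θ)) * f i - (1 / (2 * θ)) * ((1 / (kstar : ℝ)) *
        ((∑ j ∈ Finset.range kstar, f j) - 2 * θ)) := by
    intro i hi
    rw [hw i, if_pos (Finset.mem_range.mp hi)]
    ring
  rw [Finset.sum_congr rfl hcongr, Finset.sum_sub_distrib, ← Finset.mul_sum,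
    Finset.sum_const, Finset.card_range, nsmul_eq_mul]
  have hθne : θ ≠ 0 := ne_of_gt hθ
  have hkne : (kstar : ℝ) ≠ 0 := ne_of_gt hkpos
  field_simp
  ring
end

section
/- Let ξ(z), z ∈ ℤ^d, be i.i.d. Pareto(α) random variables (P(ξ(z) ≤ r) = 1 − r^{−α} for r ≥ 1) with α > d. For any A > 0, c > 0 and ε ∈ (0,1) there exists R > 0 such that for all r ≥ 1, P( max over x ∈ ℤ^d with x ∉ [−Rr,Rr]^d of ( ξ(x)/r^{d/α} − c|x|/r ) ≤ −A ) ≥ 1 − ε. -/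
/-!
A union bound over the lattice points outside the box. Since `P(ξ > t) ≤ t^{-α}` for every
`t > 0`, and outside the box the threshold that `ξ(x)` has to exceed is at least
`(c/4) r^{d/α - 1} (Rr + |x|)`, the failure probability is at most
`(c/4)^{-α} r^{α-d} ∑_x (Rr + |x|)^{-α}`. The lattice sum is `O((Rr)^{d-α})`, which makes the
bound `O(R^{d-α})` uniformly in `r`: bounding `(M + |x|)^{-α}` by `∏_i (M + |x_i|)^{-α/d}` splits
it into `d` one-dimensional sums, each `O(M^{1-α/d})` by comparison with an integral.
-/

open MeasureTheory ProbabilityTheory Finset Filter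
open scoped ENNReal

lemma sum_range_rpow_neg_add_succ_le {M β : ℝ} (hM : 0 < M) (hβ : 1 < β) (n : ℕ) :
    ∑ i ∈ range n, (M + (i + 1)) ^ (-β) ≤ M ^ (1 - β) / (β - 1) := by
  have anti : AntitoneOn (fun x : ℝ => (M + x) ^ (-β)) (Set.Icc 0 (0 + n)) :=
    fun x hx y _ hxy => Real.rpow_le_rpow_of_nonpos (by linarith [hx.1]) (by linarith) (by linarith)
  have hint : ∫ x in M..M + n, x ^ (-β) = ((M + n) ^ (1 - β) - M ^ (1 - β)) / (1 - β) := by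
    rw [integral_rpow (Or.inr ⟨by linarith, fun h => ?_⟩)]
    · ring_nf
    · rw [Set.mem_uIcc] at h
      rcases h with h | h <;> linarith [h.1, h.2, (n.cast_nonneg : (0 : ℝ) ≤ n)]
  calc ∑ i ∈ range n, (M + (i + 1)) ^ (-β)
      ≤ ∫ x in (0 : ℝ)..0 + n, (M + x) ^ (-β) := by simpa using anti.sum_le_integral
    _ = ((M + n) ^ (1 - β) - M ^ (1 - β)) / (1 - β) := by
      rw [intervalIntegral.integral_comp_add_left (fun x => x ^ (-β)), add_zero, zero_add, hint]
    _ ≤ M ^ (1 - β) / (β - 1) := by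
      rw [← neg_div_neg_eq, neg_sub, neg_sub]
      gcongr
      linarith [Real.rpow_nonneg (by positivity : (0 : ℝ) ≤ M + n) (1 - β)]

lemma tsum_ofReal_rpow_neg_add_natCast_le {M β : ℝ} (hM : 1 ≤ M) (hβ : 1 < β) :
    ∑' n : ℕ, ENNReal.ofReal ((M + n) ^ (-β)) ≤ ENNReal.ofReal (β / (β - 1) * M ^ (1 - β)) := by
  have hM0 : 0 < M := by linarith
  refine ENNReal.tsum_le_of_sum_range_le fun n => ?_
  rw [← ENNReal.ofReal_sum_of_nonneg fun i _ => by positivity]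
  refine ENNReal.ofReal_le_ofReal ?_
  have hhead : M ^ (-β) ≤ M ^ (1 - β) := Real.rpow_le_rpow_of_exponent_le hM (by linarith)
  have htail := sum_range_rpow_neg_add_succ_le hM0 hβ n
  have hsplit : β / (β - 1) * M ^ (1 - β) = M ^ (1 - β) / (β - 1) + M ^ (1 - β) := by
    field_simp [show β - 1 ≠ 0 by linarith]
    ring
  calc ∑ i ∈ range n, (M + i) ^ (-β)
      ≤ ∑ i ∈ range (n + 1), (M + i) ^ (-β) :=
        sum_le_sum_of_subset_of_nonneg (range_subset_range.2 n.le_succ) fun i _ _ => by positivity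
    _ = ∑ i ∈ range n, (M + (i + 1)) ^ (-β) + M ^ (-β) := by
      rw [sum_range_succ']
      push_cast
      simp
    _ ≤ β / (β - 1) * M ^ (1 - β) := by linarith

lemma tsum_ofReal_rpow_neg_add_abs_le {M β : ℝ} (hM : 1 ≤ M) (hβ : 1 < β) :
    ∑' k : ℤ, ENNReal.ofReal ((M + |(k : ℝ)|) ^ (-β))
      ≤ ENNReal.ofReal (2 * β / (β - 1) * M ^ (1 - β)) := by
  set f : ℤ → ℝ≥0∞ := fun k => ENNReal.ofReal ((M + |(k : ℝ)|) ^ (-β))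
  calc ∑' k, f k ≤ ∑' k, f k + f 0 := le_self_add
    _ = ∑' n : ℕ, (f n + f (-n)) := (tsum_nat_add_neg ENNReal.summable).symm
    _ = 2 * ∑' n : ℕ, ENNReal.ofReal ((M + n) ^ (-β)) := by
      simp [f, two_mul, ENNReal.tsum_add]
    _ ≤ 2 * ENNReal.ofReal (β / (β - 1) * M ^ (1 - β)) := by
      gcongr
      exact tsum_ofReal_rpow_neg_add_natCast_le hM hβ
    _ = ENNReal.ofReal (2 * β / (β - 1) * M ^ (1 - β)) := by
      rw [← ENNReal.ofReal_ofNat 2, ← ENNReal.ofReal_mul zero_le_two, mul_div_assoc, mul_assoc]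

lemma ENNReal.tsum_prod_apply_le_pow {ι κ : Type*} [Fintype ι] (g : κ → ℝ≥0∞) :
    ∑' x : ι → κ, ∏ i, g (x i) ≤ (∑' k, g k) ^ Fintype.card ι := by
  classical
  rw [ENNReal.tsum_eq_iSup_sum]
  refine iSup_le fun s => ?_
  set t : Finset κ := s.biUnion fun x => univ.image x
  calc ∑ x ∈ s, ∏ i, g (x i)
      ≤ ∑ x ∈ Fintype.piFinset fun _ => t, ∏ i, g (x i) :=
        sum_le_sum_of_subset fun x hx => Fintype.mem_piFinset.2 fun i =>
          mem_biUnion.2 ⟨x, hx, mem_image_of_mem x (mem_univ i)⟩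
    _ = ∏ _i : ι, ∑ k ∈ t, g k := (prod_univ_sum (fun _ => t) fun _ => g).symm
    _ ≤ ∏ _i : ι, ∑' k, g k := prod_le_prod' fun _ _ => ENNReal.sum_le_tsum t
    _ = (∑' k, g k) ^ Fintype.card ι := by rw [prod_const, card_univ]

lemma rpow_neg_add_sum_le_prod {ι : Type*} [Fintype ι] [Nonempty ι] {M p : ℝ} (hM : 0 < M)
    (hp : 0 ≤ p) {y : ι → ℝ} (hy : ∀ i, 0 ≤ y i) :
    (M + ∑ i, y i) ^ (-p) ≤ ∏ i, (M + y i) ^ (-(p / Fintype.card ι)) := by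
  have hsum : 0 ≤ ∑ i, y i := sum_nonneg fun i _ => hy i
  have hcard : (Fintype.card ι : ℝ) ≠ 0 := by exact_mod_cast Fintype.card_ne_zero
  calc (M + ∑ i, y i) ^ (-p) = ∏ _i : ι, (M + ∑ i, y i) ^ (-(p / Fintype.card ι)) := by
        rw [prod_const, card_univ, ← Real.rpow_natCast, ← Real.rpow_mul (by positivity)]
        field_simp
    _ ≤ ∏ i, (M + y i) ^ (-(p / Fintype.card ι)) := by
      refine prod_le_prod (fun _ _ => by positivity) fun i _ => ?_
      refine Real.rpow_le_rpow_of_nonpos (by linarith [hy i]) ?_ (by simp; positivity)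
      linarith [single_le_sum (fun j _ => hy j) (mem_univ i)]

lemma tsum_ofReal_rpow_neg_add_sum_abs_le {ι : Type*} [Fintype ι] [Nonempty ι] {M α : ℝ}
    (hM : 1 ≤ M) (hα : (Fintype.card ι : ℝ) < α) :
    ∑' x : ι → ℤ, ENNReal.ofReal ((M + ∑ i, |(x i : ℝ)|) ^ (-α))
      ≤ ENNReal.ofReal ((2 * α / (α - Fintype.card ι)) ^ Fintype.card ι
          * M ^ ((Fintype.card ι : ℝ) - α)) := by
  set d : ℕ := Fintype.card ι
  have hd : (0 : ℝ) < d := by exact_mod_cast Fintype.card_pos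
  have hM0 : 0 < M := by linarith
  have hβ : 1 < α / d := by rwa [one_lt_div hd]
  calc ∑' x : ι → ℤ, ENNReal.ofReal ((M + ∑ i, |(x i : ℝ)|) ^ (-α))
      ≤ ∑' x : ι → ℤ, ∏ i, ENNReal.ofReal ((M + |(x i : ℝ)|) ^ (-(α / d))) := by
        refine ENNReal.tsum_le_tsum fun x => ?_
        rw [← ENNReal.ofReal_prod_of_nonneg fun i _ => by positivity]
        exact ENNReal.ofReal_le_ofReal
          (rpow_neg_add_sum_le_prod hM0 (by linarith) fun i => abs_nonneg _)
    _ ≤ (∑' k : ℤ, ENNReal.ofReal ((M + |(k : ℝ)|) ^ (-(α / d)))) ^ d :=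
        ENNReal.tsum_prod_apply_le_pow _
    _ ≤ ENNReal.ofReal (2 * (α / d) / (α / d - 1) * M ^ (1 - α / d)) ^ d := by
        gcongr
        exact tsum_ofReal_rpow_neg_add_abs_le hM hβ
    _ = ENNReal.ofReal ((2 * α / (α - d)) ^ d * M ^ ((d : ℝ) - α)) := by
        rw [← ENNReal.ofReal_pow (by positivity), mul_pow, ← Real.rpow_natCast (M ^ _),
          ← Real.rpow_mul hM0.le]
        congr 3 <;> field_simp

lemma measure_lt_le_rpow_neg {Ω : Type*} [MeasurableSpace Ω] {P : Measure Ω}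
    [IsProbabilityMeasure P] {X : Ω → ℝ} {α : ℝ} (hX : Measurable X) (hα : 0 ≤ α)
    (hcdf : ∀ r : ℝ, 1 ≤ r → P {ω | X ω ≤ r} = ENNReal.ofReal (1 - r ^ (-α)))
    {t : ℝ} (ht : 0 < t) :
    P {ω | t < X ω} ≤ ENNReal.ofReal (t ^ (-α)) := by
  rcases lt_or_ge t 1 with ht1 | ht1
  · calc P {ω | t < X ω} ≤ 1 := prob_le_one
      _ ≤ ENNReal.ofReal (t ^ (-α)) := ENNReal.one_le_ofReal.2
          (Real.one_le_rpow_of_pos_of_le_one_of_nonpos ht ht1.le (by linarith))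
  · have hle : t ^ (-α) ≤ 1 := Real.rpow_le_one_of_one_le_of_nonpos ht1 (by linarith)
    have hcompl : {ω | t < X ω} = {ω | X ω ≤ t}ᶜ := by ext; simp
    rw [hcompl, prob_compl_eq_one_sub (measurableSet_le hX measurable_const), hcdf t ht1,
      ← ENNReal.ofReal_one, ← ENNReal.ofReal_sub _ (by linarith), sub_sub_cancel]

lemma lt_of_neg_lt_div_sub {A c R r s a y : ℝ} (hc : 0 < c) (hr : 0 < r) (ha : 0 < a)
    (hRA : 2 * A ≤ c * R) (hs : R * r < s) (hy : -A < y / a - c * s / r) :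
    c / 4 * (a / r) * (R * r + s) < y := by
  have hsr : R < s / r := by rwa [lt_div_iff₀ hr]
  have hya : a * (c * (s / r) - A) < y := by
    rw [← lt_div_iff₀' ha]
    rw [mul_div_assoc] at hy
    linarith
  calc c / 4 * (a / r) * (R * r + s) = a * (c / 4 * R + c / 4 * (s / r)) := by field_simp
    _ ≤ a * (c * (s / r) - A) := by gcongr; nlinarith
    _ < y := hya

lemma compl_setOf_forall_far_le_subset {ι Ω : Type*} [Fintype ι] (ξ : (ι → ℤ) → Ω → ℝ)
    {A c R r a : ℝ} (hc : 0 < c) (hr : 0 < r) (ha : 0 < a) (hRA : 2 * A ≤ c * R) :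
    {ω | ∀ x : ι → ℤ, ¬ (∀ i, |(x i : ℝ)| ≤ R * r) →
        ξ x ω / a - c * (∑ i, |(x i : ℝ)|) / r ≤ -A}ᶜ
      ⊆ ⋃ x, {ω | c / 4 * (a / r) * (R * r + ∑ i, |(x i : ℝ)|) < ξ x ω} := by
  intro ω hω
  simp only [Set.mem_compl_iff, Set.mem_ofPred_eq, not_forall, not_le, exists_prop] at hω
  obtain ⟨x, ⟨i, hi⟩, hx⟩ := hω
  have hS : R * r < ∑ j, |(x j : ℝ)| :=
    hi.trans_le (single_le_sum (f := fun j => |(x j : ℝ)|) (fun j _ => abs_nonneg _) (mem_univ i))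
  exact Set.mem_iUnion.2 ⟨x, lt_of_neg_lt_div_sub hc hr ha hRA hS hx⟩

lemma measure_compl_setOf_forall_far_le {d : ℕ} (hd : 0 < d) {α : ℝ} (hα : (d : ℝ) < α)
    {Ω : Type*} [MeasurableSpace Ω] {P : Measure Ω} [IsProbabilityMeasure P]
    {ξ : (Fin d → ℤ) → Ω → ℝ} (hmeas : ∀ z, Measurable (ξ z))
    (hcdf : ∀ z, ∀ r : ℝ, 1 ≤ r → P {ω | ξ z ω ≤ r} = ENNReal.ofReal (1 - r ^ (-α)))
    {A c R r : ℝ} (hc : 0 < c) (hR : 1 ≤ R) (hRA : 2 * A ≤ c * R) (hr : 1 ≤ r) :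
    P {ω | ∀ x : Fin d → ℤ, ¬ (∀ i, |(x i : ℝ)| ≤ R * r) →
        ξ x ω / r ^ ((d : ℝ) / α) - c * (∑ i, |(x i : ℝ)|) / r ≤ -A}ᶜ
      ≤ ENNReal.ofReal ((c / 4) ^ (-α) * (2 * α / (α - d)) ^ d * R ^ ((d : ℝ) - α)) := by
  have : Nonempty (Fin d) := ⟨⟨0, hd⟩⟩
  have hr0 : 0 < r := by linarith
  set a := r ^ ((d : ℝ) / α)
  set S : (Fin d → ℤ) → ℝ := fun x => ∑ i, |(x i : ℝ)|
  have har : (a / r) ^ (-α) = r ^ (α - d) := by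
    rw [← Real.rpow_sub_one hr0.ne', ← Real.rpow_mul hr0.le]
    congr 1
    field_simp [show α ≠ 0 by linarith]
    ring
  have hrr : r ^ (α - d) * r ^ ((d : ℝ) - α) = 1 := by
    rw [← Real.rpow_add hr0]
    norm_num
  calc _ ≤ ∑' x, P {ω | c / 4 * (a / r) * (R * r + S x) < ξ x ω} :=
        (measure_mono (compl_setOf_forall_far_le_subset ξ hc hr0 (by positivity) hRA)).trans
          (measure_iUnion_le _)
    _ ≤ ∑' x, ENNReal.ofReal ((c / 4) ^ (-α) * r ^ (α - d) * (R * r + S x) ^ (-α)) := by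
        refine ENNReal.tsum_le_tsum fun x => ?_
        convert measure_lt_le_rpow_neg (hmeas x) (by linarith) (hcdf x) _ using 2
        · rw [Real.mul_rpow (by positivity) (by positivity),
            Real.mul_rpow (by positivity) (by positivity), har]
        · positivity
    _ = ENNReal.ofReal ((c / 4) ^ (-α) * r ^ (α - d))
          * ∑' x, ENNReal.ofReal ((R * r + S x) ^ (-α)) := by
        simp_rw [ENNReal.ofReal_mul (by positivity : 0 ≤ (c / 4) ^ (-α) * r ^ (α - d))]
        exact ENNReal.tsum_mul_left
    _ ≤ ENNReal.ofReal ((c / 4) ^ (-α) * r ^ (α - d))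
          * ENNReal.ofReal ((2 * α / (α - d)) ^ d * (R * r) ^ ((d : ℝ) - α)) := by
        gcongr
        simpa using tsum_ofReal_rpow_neg_add_sum_abs_le (ι := Fin d)
          (one_le_mul_of_one_le_of_one_le hR hr) (by simpa using hα)
    _ = _ := by
        rw [← ENNReal.ofReal_mul (by positivity), Real.mul_rpow (by positivity) hr0.le]
        congr 1
        linear_combination
          ((c / 4) ^ (-α) * (2 * α / (α - d)) ^ d * R ^ ((d : ℝ) - α)) * hrr

theorem stmt8_general (d : ℕ) (hd : 0 < d) (α : ℝ) (hα : (d : ℝ) < α)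
    (Ω : Type*) [MeasurableSpace Ω] (P : Measure Ω) [IsProbabilityMeasure P]
    (ξ : (Fin d → ℤ) → Ω → ℝ)
    (hmeas : ∀ z, Measurable (ξ z))
    (hcdf : ∀ z, ∀ r : ℝ, 1 ≤ r →
      P {ω | ξ z ω ≤ r} = ENNReal.ofReal (1 - r ^ (-α)))
    (A c ε : ℝ) (hc : 0 < c) (hε : 0 < ε) :
    ∃ R : ℝ, 0 < R ∧ ∀ r : ℝ, 1 ≤ r →
      ENNReal.ofReal (1 - ε) ≤
        P {ω | ∀ x : Fin d → ℤ, ¬ (∀ i, |(x i : ℝ)| ≤ R * r) →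
          ξ x ω / r ^ ((d : ℝ) / α) - c * (∑ i, |(x i : ℝ)|) / r ≤ -A} := by
  set C : ℝ := (c / 4) ^ (-α) * (2 * α / (α - d)) ^ d
  have hlim : Tendsto (fun R : ℝ => C * R ^ ((d : ℝ) - α)) atTop (nhds 0) := by
    simpa [neg_sub] using (tendsto_rpow_neg_atTop (sub_pos.2 hα)).const_mul C
  obtain ⟨R, hR, hRA, hRε⟩ := ((eventually_ge_atTop 1).and ((eventually_ge_atTop (2 * A / c)).and
    (hlim.eventually (ge_mem_nhds hε)))).exists
  refine ⟨R, by linarith, fun r hr => ?_⟩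
  have hRA' : 2 * A ≤ c * R := by
    rw [div_le_iff₀ hc] at hRA
    linarith
  have hbad := (measure_compl_setOf_forall_far_le hd hα hmeas hcdf hc hR hRA' hr).trans
    (ENNReal.ofReal_le_ofReal hRε)
  rw [ENNReal.ofReal_sub _ hε.le, ENNReal.ofReal_one, tsub_le_iff_right, ← measure_univ (μ := P)]
  exact (measure_univ_le_add_compl _).trans (by gcongr)

/-- for an i.i.d. Pareto(α) field `ξ` on `ℤ^d` with `α > d`:
for all `A, c > 0` and `ε ∈ (0,1)` there is `R > 0` such that for all `r ≥ 1`,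
with probability at least `1 − ε` every lattice point `x` outside the box
`[−Rr,Rr]^d` satisfies `ξ(x)/r^{d/α} − c|x|/r ≤ −A` (ℓ¹ norm). -/
theorem stmt8 (d : ℕ) (hd : 0 < d) (α : ℝ) (hα : (d : ℝ) < α)
    (Ω : Type*) [MeasurableSpace Ω] (P : Measure Ω) [IsProbabilityMeasure P]
    (ξ : (Fin d → ℤ) → Ω → ℝ)
    (hmeas : ∀ z, Measurable (ξ z))
    (hindep : iIndepFun ξ P)
    (hcdf : ∀ z, ∀ r : ℝ, 1 ≤ r →
      P {ω | ξ z ω ≤ r} = ENNReal.ofReal (1 - r ^ (-α)))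
    (hge1 : ∀ z, ∀ᵐ ω ∂P, 1 ≤ ξ z ω)
    (A c ε : ℝ) (hA : 0 < A) (hc : 0 < c) (hε : 0 < ε) (hε1 : ε < 1) :
    ∃ R : ℝ, 0 < R ∧ ∀ r : ℝ, 1 ≤ r →
      ENNReal.ofReal (1 - ε) ≤
        P {ω | ∀ x : Fin d → ℤ, ¬ (∀ i, |(x i : ℝ)| ≤ R * r) →
          ξ x ω / r ^ ((d : ℝ) / α) - c * (∑ i, |(x i : ℝ)|) / r ≤ -A} :=
  stmt8_general d hd α hα Ω P ξ hmeas hcdf A c ε hc hε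
end

section
/- Define d̄ on ℝ × ℝ^d by d̄((λ,z),(λ',z')) = e^{−min(λ,λ')} (1 − e^{−|λ−λ'| − |z−z'|}), where |·| is the ℓ¹ norm on ℝ^d. Then d̄ is a metric on ℝ × ℝ^d; in particular it satisfies the triangle inequality. -/
private lemma key13 (u v w s t r : ℝ) (hu : 0 < u) (hv : 0 < v) (hw : 0 < w)
    (hs1 : s ≤ 1) (ht1 : t ≤ 1) (hs0 : 0 < s) (ht0 : 0 < t)
    (hr : s * t ≤ r) :
    max u w - min u w * r ≤ (max u v - min u v * s) + (max v w - min v w * t) := by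
  rcases le_total u v with h | h <;> rcases le_total v w with h' | h' <;>
    rcases le_total u w with h'' | h'' <;>
    simp only [min_eq_left, min_eq_right, max_eq_left, max_eq_right, h, h', h''] <;>
    nlinarith [mul_nonneg (sub_nonneg.2 hs1) (sub_nonneg.2 ht1),
      mul_nonneg hu.le (sub_nonneg.2 hs1), mul_nonneg hu.le (sub_nonneg.2 ht1),
      mul_nonneg hv.le (sub_nonneg.2 hs1), mul_nonneg hv.le (sub_nonneg.2 ht1),
      mul_nonneg hw.le (sub_nonneg.2 hs1), mul_nonneg hw.le (sub_nonneg.2 ht1),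
      mul_le_mul_of_nonneg_left hr hu.le, mul_le_mul_of_nonneg_left hr hv.le,
      mul_le_mul_of_nonneg_left hr hw.le,
      mul_nonneg (mul_nonneg hu.le hs0.le) (sub_nonneg.2 ht1),
      mul_nonneg (mul_nonneg hv.le hs0.le) (sub_nonneg.2 ht1),
      mul_nonneg (mul_nonneg hw.le ht0.le) (sub_nonneg.2 hs1),
      mul_nonneg (mul_nonneg hu.le ht0.le) (sub_nonneg.2 hs1)]

private lemma min_add_abs (a b : ℝ) : min a b + |a - b| = max a b := by
  rcases le_total a b with h | h <;>
    simp [min_eq_left, min_eq_right, max_eq_left, max_eq_right, h,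
      abs_of_nonneg, abs_of_nonpos, sub_nonneg.2 h, sub_nonpos.2 h] <;> ring

/-- `d̄((λ,z),(λ',z')) = e^{−min(λ,λ')}(1 − e^{−|λ−λ'| − |z−z'|})`
(with `|·|` the ℓ¹ norm on `ℝ^d`) is a metric on `ℝ × ℝ^d`: it is symmetric,
vanishes exactly on the diagonal, and satisfies the triangle inequality. -/
theorem stmt13 (d : ℕ)
    (D : (ℝ × (Fin d → ℝ)) → (ℝ × (Fin d → ℝ)) → ℝ)
    (hD : ∀ p q, D p q =
      Real.exp (-(min p.1 q.1)) *
        (1 - Real.exp (-|p.1 - q.1| - ∑ i, |p.2 i - q.2 i|))) :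
    (∀ p q, D p q = D q p) ∧
    (∀ p q, D p q = 0 ↔ p = q) ∧
    (∀ p q r, D p r ≤ D p q + D q r) := by
  -- alternative formula
  have hD' : ∀ p q, D p q = max (Real.exp (-p.1)) (Real.exp (-q.1)) -
      min (Real.exp (-p.1)) (Real.exp (-q.1)) *
        Real.exp (-∑ i, |p.2 i - q.2 i|) := by
    intro p q
    rw [hD]
    have h1 : Real.exp (-(min p.1 q.1)) = max (Real.exp (-p.1)) (Real.exp (-q.1)) := by
      rcases le_total p.1 q.1 with h | h <;>
        simp [min_eq_left, min_eq_right, max_eq_left, max_eq_right, h,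
          Real.exp_le_exp.mpr (neg_le_neg h)]
    have h2 : Real.exp (-(min p.1 q.1)) * Real.exp (-|p.1 - q.1|)
        = min (Real.exp (-p.1)) (Real.exp (-q.1)) := by
      rw [← Real.exp_add]
      have hh : -min p.1 q.1 + -|p.1 - q.1| = -(max p.1 q.1) := by
        rw [← min_add_abs p.1 q.1]; ring
      rw [hh]
      rcases le_total p.1 q.1 with h | h <;>
        simp [min_eq_left, min_eq_right, max_eq_left, max_eq_right, h,
          Real.exp_le_exp.mpr (neg_le_neg h)]
    rw [mul_sub, mul_one, h1, sub_eq_add_neg (-|p.1 - q.1|), Real.exp_add]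
    rw [← h1, ← mul_assoc, h2]
  refine ⟨?_, ?_, ?_⟩
  · intro p q
    rw [hD, hD, min_comm, abs_sub_comm]
    have : ∑ i, |p.2 i - q.2 i| = ∑ i, |q.2 i - p.2 i| :=
      Finset.sum_congr rfl fun i _ => abs_sub_comm _ _
    rw [this]
  · intro p q
    rw [hD]
    constructor
    · intro h
      rcases mul_eq_zero.1 h with h | h
      · exact absurd h (Real.exp_ne_zero _)
      · have h2 : Real.exp (-|p.1 - q.1| - ∑ i, |p.2 i - q.2 i|) = 1 := by linarith
        have h3 : -|p.1 - q.1| - ∑ i, |p.2 i - q.2 i| = 0 := by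
          exact Real.exp_injective (by rw [h2, Real.exp_zero])
        have hsum : (0:ℝ) ≤ ∑ i, |p.2 i - q.2 i| :=
          Finset.sum_nonneg fun i _ => abs_nonneg _
        have h4 : |p.1 - q.1| = 0 := by
          have := abs_nonneg (p.1 - q.1); linarith
        have h5 : ∑ i, |p.2 i - q.2 i| = 0 := by
          have := abs_nonneg (p.1 - q.1); linarith
        have h6 : p.1 = q.1 := by
          have := abs_eq_zero.mp h4; linarith
        have h7 : p.2 = q.2 := by
          funext i
          have := (Finset.sum_eq_zero_iff_of_nonneg
            (fun i _ => abs_nonneg (p.2 i - q.2 i))).mp h5 i (Finset.mem_univ i)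
          have := abs_eq_zero.mp this
          linarith
        exact Prod.ext h6 h7
    · rintro rfl
      simp
  · intro p q r
    rw [hD' p r, hD' p q, hD' q r]
    have hS : ∑ i, |p.2 i - r.2 i| ≤ (∑ i, |p.2 i - q.2 i|) + ∑ i, |q.2 i - r.2 i| := by
      rw [← Finset.sum_add_distrib]
      exact Finset.sum_le_sum fun i _ => abs_sub_le _ _ _
    apply key13 _ _ _ _ _ _ (Real.exp_pos _) (Real.exp_pos _) (Real.exp_pos _)
    · exact Real.exp_le_one_iff.mpr (neg_nonpos.mpr
        (Finset.sum_nonneg fun i _ => abs_nonneg _))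
    · exact Real.exp_le_one_iff.mpr (neg_nonpos.mpr
        (Finset.sum_nonneg fun i _ => abs_nonneg _))
    · exact Real.exp_pos _
    · exact Real.exp_pos _
    · rw [← Real.exp_add]
      apply Real.exp_le_exp.mpr
      linarith
end

section
/- Let ζ be a Poisson point process on (0,1)^d with constant intensity λ > 0, and let k ∈ ℕ with k ≤ (λ/4)^{1/d}. Then with probability at least 1 − exp(−(λ/4)^{1/d}) there exist distinct points Z₁,…,Z_k of ζ such that D₀(Z₁,…,Z_k) < d, where D₀ is the shortest ℓ¹-length of a path from the origin visiting all of Z₁,…,Z_k. -/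
/-!
Let `T = (0,1) × (0,1/k)^(d-1)`. If `ζ` has at least `k` points in `T`, visit `k` of them in
increasing order of the first coordinate: the first coordinates contribute less than `1` in
total, the other `d - 1` coordinates at most `(d - 1)/k` per step, so the path has length `< d`.
The number of points in `T` is Poisson with mean `μ = λ k^(1-d) ≥ 4 (λ/4)^(1/d) ≥ 4k`, and
comparing `e^(-μ) ∑_{m<k} μ^m/m!` termwise with the series of `e^(μ/2)` bounds the probability
of fewer than `k` points by `2^k e^(-μ/2) ≤ e^(k - μ/2) ≤ e^(-(λ/4)^(1/d))`.
-/

open MeasureTheory ProbabilityTheory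

/-- ℓ¹ length of the path `0 → l₀ → l₁ → ⋯` in `ℝ^d`. -/
def pathLenR (d : ℕ) (l : List (Fin d → ℝ)) : ℝ :=
  (List.zipWith (fun x y : Fin d → ℝ => ∑ i, |x i - y i|) ((fun _ => 0) :: l) l).sum

open Real Finset in
theorem Real.exp_neg_mul_sum_range_pow_div_factorial_le {x : ℝ} (hx : 0 ≤ x) (k : ℕ) :
    exp (-x) * ∑ m ∈ range k, x ^ m / m.factorial ≤ exp (k - x / 2) := by
  have hsum : ∑ m ∈ range k, x ^ m / m.factorial ≤ 2 ^ k * exp (x / 2) := by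
    calc ∑ m ∈ range k, x ^ m / m.factorial
        = ∑ m ∈ range k, 2 ^ m * ((x / 2) ^ m / m.factorial) := by
          refine sum_congr rfl fun m _ => ?_
          rw [div_pow, mul_div_assoc', mul_div_cancel₀ _ (by positivity)]
      _ ≤ ∑ m ∈ range k, 2 ^ k * ((x / 2) ^ m / m.factorial) := by
          gcongr with m hm
          · norm_num
          · exact (mem_range.1 hm).le
      _ ≤ 2 ^ k * exp (x / 2) := by
          rw [← mul_sum]
          gcongr
          exact sum_le_exp_of_nonneg (by positivity) k
  have htwo : (2 : ℝ) ^ k ≤ exp k := by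
    rw [← exp_one_pow]
    gcongr
    linarith [add_one_le_exp 1]
  calc exp (-x) * ∑ m ∈ range k, x ^ m / m.factorial
      ≤ exp (-x) * (exp k * exp (x / 2)) := by gcongr; exact hsum.trans (by gcongr)
    _ = exp (k - x / 2) := by rw [← exp_add, ← exp_add]; ring_nf

theorem sum_zipWith_le_of_isChain {α : Type*} {cost : α → α → ℝ} {g : α → ℝ} {c : ℝ} :
    ∀ {p : α} {l : List α}, (p :: l).IsChain (fun x y => cost x y ≤ g y - g x + c) →
      (List.zipWith cost (p :: l) l).sum
        ≤ g ((p :: l).getLast (List.cons_ne_nil p l)) - g p + l.length * c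
  | p, [], _ => by simp
  | p, x :: l, h => by
    obtain ⟨hpx, hl⟩ := List.isChain_cons_cons.1 h
    have := sum_zipWith_le_of_isChain hl
    simp only [List.zipWith_cons_cons, List.sum_cons, List.getLast_cons_cons,
      List.length_cons] at this ⊢
    push_cast
    linarith

theorem sum_abs_sub_le_of_forall_ne {ι : Type*} [Fintype ι] [DecidableEq ι] {x y : ι → ℝ}
    (i₀ : ι) {w : ℝ} (h : ∀ i ≠ i₀, |x i - y i| ≤ w) :
    ∑ i, |x i - y i| ≤ |x i₀ - y i₀| + ((Fintype.card ι : ℝ) - 1) * w := by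
  rw [← Finset.add_sum_erase _ _ (Finset.mem_univ i₀)]
  gcongr
  calc ∑ i ∈ Finset.univ.erase i₀, |x i - y i|
      ≤ (Finset.univ.erase i₀).card • w :=
        Finset.sum_le_card_nsmul _ _ _ fun i hi => h i (Finset.ne_of_mem_erase hi)
    _ = ((Fintype.card ι : ℝ) - 1) * w := by
        rw [Finset.card_erase_of_mem (Finset.mem_univ _), Finset.card_univ, nsmul_eq_mul,
          Nat.cast_pred (Fintype.card_pos_iff.2 ⟨i₀⟩)]

section Tube

variable {ι : Type*} [DecidableEq ι]

def tube (i₀ : ι) (w : ℝ) : Set (ι → ℝ) :=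
  Set.univ.pi fun i => Set.Ioo 0 (Function.update (fun _ => w) i₀ 1 i)

theorem mem_tube {i₀ : ι} {w : ℝ} {y : ι → ℝ} :
    y ∈ tube i₀ w ↔ y i₀ ∈ Set.Ioo 0 1 ∧ ∀ i ≠ i₀, y i ∈ Set.Ioo 0 w := by
  simp only [tube, Set.mem_univ_pi]
  refine ⟨fun h => ⟨by simpa using h i₀, fun i hi => by simpa [hi] using h i⟩, fun h i => ?_⟩
  rcases eq_or_ne i i₀ with rfl | hi
  · simpa using h.1
  · simpa [hi] using h.2 i hi

theorem measurableSet_tube [Finite ι] (i₀ : ι) (w : ℝ) : MeasurableSet (tube i₀ w) :=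
  MeasurableSet.univ_pi fun _ => measurableSet_Ioo

theorem tube_subset_unitCube (i₀ : ι) {w : ℝ} (hw : w ≤ 1) :
    tube i₀ w ⊆ {y | ∀ j, 0 < y j ∧ y j < 1} := by
  intro y hy j
  obtain ⟨hy₀, hy⟩ := mem_tube.1 hy
  rcases eq_or_ne j i₀ with rfl | hj
  · exact hy₀
  · exact ⟨(hy j hj).1, (hy j hj).2.trans_le hw⟩

theorem volume_tube_toReal [Fintype ι] (i₀ : ι) {w : ℝ} (hw : 0 ≤ w) :
    (volume (tube i₀ w)).toReal = w ^ (Fintype.card ι - 1) := by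
  have hside : ∀ i, 0 ≤ Function.update (fun _ => w) i₀ 1 i := fun i => by
    rcases eq_or_ne i i₀ with rfl | hi <;> simp [*]
  rw [tube, Real.volume_pi_Ioo, ENNReal.toReal_prod]
  simp only [sub_zero, ENNReal.toReal_ofReal (hside _)]
  rw [Finset.prod_update_of_mem (Finset.mem_univ i₀), one_mul, Finset.prod_const,
    Finset.card_sdiff, Finset.card_univ, Finset.inter_univ, Finset.card_singleton]

end Tube

theorem exists_pathLenR_lt_of_subset_tube {d k : ℕ} (i₀ : Fin d) (F : Finset (Fin d → ℝ))
    (hF : ↑F ⊆ tube i₀ (1 / k)) (hcard : F.card = k) :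
    ∃ l : List (Fin d → ℝ), l.Nodup ∧ l.length = k ∧ (∀ p ∈ l, p ∈ F) ∧ pathLenR d l < d := by
  set l := F.toList.mergeSort fun x y => decide (x i₀ ≤ y i₀)
  have hperm : l.Perm F.toList := List.mergeSort_perm _ _
  have hmem : ∀ p ∈ l, p ∈ F := fun p hp => Finset.mem_toList.1 (hperm.subset hp)
  have hsorted : l.Pairwise fun x y => x i₀ ≤ y i₀ := by
    simpa using List.pairwise_mergeSort (le := fun x y : Fin d → ℝ => decide (x i₀ ≤ y i₀))
      (fun _ _ _ hab hbc => by simp only [decide_eq_true_eq] at *; linarith)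
      (fun _ _ => by simpa using le_total _ _) F.toList
  have hbox : ∀ x ∈ (0 :: l), x i₀ ∈ Set.Ico 0 1 ∧ ∀ i ≠ i₀, x i ∈ Set.Icc 0 (1 / (k : ℝ)) := by
    rintro x (_ | ⟨_, hx⟩)
    · simp
    · obtain ⟨hx₀, hx⟩ := mem_tube.1 (hF (hmem x hx))
      exact ⟨Set.Ioo_subset_Ico_self hx₀, fun i hi => Set.Ioo_subset_Icc_self (hx i hi)⟩
  have hchain : (0 :: l).IsChain
      fun x y => ∑ i, |x i - y i| ≤ y i₀ - x i₀ + ((d : ℝ) - 1) * (1 / k) := by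
    have hsorted₀ : (0 :: l).Pairwise fun x y => x i₀ ≤ y i₀ :=
      List.pairwise_cons.2 ⟨fun x hx => (hbox x (.tail _ hx)).1.1, hsorted⟩
    refine hsorted₀.isChain.imp_of_mem_imp fun x y hx hy hxy => ?_
    have hstep := sum_abs_sub_le_of_forall_ne i₀ (x := x) (y := y) (w := 1 / k) fun i hi =>
      abs_sub_le_of_nonneg_of_le ((hbox x hx).2 i hi).1 ((hbox x hx).2 i hi).2
        ((hbox y hy).2 i hi).1 ((hbox y hy).2 i hi).2
    rwa [Fintype.card_fin, abs_sub_comm, abs_of_nonneg (sub_nonneg.2 hxy)] at hstep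
  have hlen : l.length = k := by rw [hperm.length_eq, Finset.length_toList, hcard]
  refine ⟨l, hperm.nodup_iff.2 F.nodup_toList, hlen, hmem, ?_⟩
  have hlast := (hbox _ (List.getLast_mem (List.cons_ne_nil 0 l))).1.2
  have hd : (1 : ℝ) ≤ d := by exact_mod_cast i₀.pos
  have hk : (k : ℝ) * (1 / k) ≤ 1 := by
    rcases k.eq_zero_or_pos with rfl | hk
    · simp
    · rw [mul_one_div_cancel (by positivity)]
  calc pathLenR d l
      ≤ (0 :: l).getLast (List.cons_ne_nil 0 l) i₀ - 0 + l.length * (((d : ℝ) - 1) * (1 / k)) :=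
        sum_zipWith_le_of_isChain hchain
    _ < 1 + (d - 1) * 1 := by
        rw [hlen, mul_left_comm]
        linarith [mul_le_mul_of_nonneg_left hk (sub_nonneg.2 hd)]
    _ = d := by ring

theorem Set.exists_finset_subset_card_eq_of_not_finite_ncard_lt {α : Type*} {s : Set α} {k : ℕ}
    (h : ¬(s.Finite ∧ s.ncard < k)) : ∃ F : Finset α, ↑F ⊆ s ∧ F.card = k := by
  by_cases hs : s.Finite
  · obtain ⟨t, hts, htk⟩ := Finset.exists_subset_card_eq (s := hs.toFinset) (n := k)
      (by rw [← Set.ncard_eq_toFinset_card s hs]; exact not_lt.1 fun hlt => h ⟨hs, hlt⟩)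
    exact ⟨t, fun x hx => hs.mem_toFinset.1 (hts hx), htk⟩
  · exact Set.Infinite.exists_subset_card_eq hs k

section Probability

variable {Ω : Type*} [MeasurableSpace Ω] {P : Measure Ω}

theorem measure_finite_ncard_lt_le {α : Type*} (S : Ω → Set α) {μ : ℝ} (hμ : 0 ≤ μ)
    (hS : ∀ m : ℕ, P {ω | (S ω).Finite ∧ (S ω).ncard = m} =
      ENNReal.ofReal (Real.exp (-μ) * μ ^ m / m.factorial)) (k : ℕ) :
    P {ω | (S ω).Finite ∧ (S ω).ncard < k} ≤ ENNReal.ofReal (Real.exp (k - μ / 2)) := by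
  have hunion : {ω | (S ω).Finite ∧ (S ω).ncard < k}
      = ⋃ m ∈ Finset.range k, {ω | (S ω).Finite ∧ (S ω).ncard = m} := by
    ext ω; simp
  calc P {ω | (S ω).Finite ∧ (S ω).ncard < k}
      ≤ ∑ m ∈ Finset.range k, P {ω | (S ω).Finite ∧ (S ω).ncard = m} :=
        hunion ▸ measure_biUnion_finset_le _ _
    _ = ENNReal.ofReal (Real.exp (-μ) * ∑ m ∈ Finset.range k, μ ^ m / m.factorial) := by
        rw [Finset.mul_sum, ENNReal.ofReal_sum_of_nonneg fun m _ => by positivity]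
        simp only [hS, mul_div_assoc]
    _ ≤ ENNReal.ofReal (Real.exp (k - μ / 2)) :=
        ENNReal.ofReal_le_ofReal (Real.exp_neg_mul_sum_range_pow_div_factorial_le hμ k)

theorem ofReal_one_sub_le_measure [IsProbabilityMeasure P] {E F : Set Ω} {δ : ℝ} (hδ : 0 ≤ δ)
    (hEF : Eᶜ ⊆ F) (hF : P F ≤ ENNReal.ofReal δ) : ENNReal.ofReal (1 - δ) ≤ P E := by
  rw [ENNReal.ofReal_sub _ hδ, ENNReal.ofReal_one, tsub_le_iff_right]
  calc (1 : ENNReal) = P (E ∪ Eᶜ) := by rw [Set.union_compl_self, measure_univ]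
    _ ≤ P E + P F := (measure_union_le _ _).trans (by gcongr)
    _ ≤ P E + ENNReal.ofReal δ := by gcongr

end Probability

theorem stmt15_general (d : ℕ) (hd : 0 < d) (lam : ℝ) (hlam : 0 < lam)
    (k : ℕ) (hk : 0 < k) (hkle : (k : ℝ) ≤ (lam / 4) ^ ((1 : ℝ) / d))
    (Ω : Type*) [MeasurableSpace Ω] (P : Measure Ω) [IsProbabilityMeasure P]
    (ζ : Ω → Set (Fin d → ℝ))
    (hPPP : ∀ (n : ℕ) (A : Fin n → Set (Fin d → ℝ)),
      (∀ i, MeasurableSet (A i)) →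
      (∀ i, A i ⊆ {y | ∀ j, 0 < y j ∧ y j < 1}) →
      Pairwise (Function.onFun Disjoint A) →
      iIndepFun (fun i ω => (ζ ω ∩ A i).ncard) P ∧
      ∀ i, ∀ m : ℕ,
        P {ω | (ζ ω ∩ A i).Finite ∧ (ζ ω ∩ A i).ncard = m} =
          ENNReal.ofReal (Real.exp (-(lam * (volume (A i)).toReal)) *
            (lam * (volume (A i)).toReal) ^ m / m.factorial)) :
    ENNReal.ofReal (1 - Real.exp (-((lam / 4) ^ ((1 : ℝ) / d)))) ≤
      P {ω | ∃ l : List (Fin d → ℝ), l.Nodup ∧ l.length = k ∧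
        (∀ p ∈ l, p ∈ ζ ω) ∧ pathLenR d l < d} := by
  set M := (lam / 4) ^ ((1 : ℝ) / d)
  have hk1 : (1 : ℝ) ≤ k := by exact_mod_cast hk
  have hlamM : lam = 4 * M * M ^ (d - 1) := by
    rw [mul_assoc, ← pow_succ', Nat.sub_add_cancel hd, ← Real.rpow_natCast,
      ← Real.rpow_mul (by positivity), one_div_mul_cancel (by positivity), Real.rpow_one]
    ring
  set T := tube (⟨0, hd⟩ : Fin d) (1 / k)
  have hμ : 4 * M ≤ lam * (volume T).toReal := by
    rw [volume_tube_toReal _ (by positivity), Fintype.card_fin, hlamM, mul_assoc, ← mul_pow]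
    refine le_mul_of_one_le_right (by positivity) (one_le_pow₀ ?_)
    rwa [mul_one_div, one_le_div (by positivity)]
  have hcount := (hPPP 1 (fun _ => T) (fun _ => measurableSet_tube _ _)
    (fun _ => tube_subset_unitCube _ (by rwa [div_le_one (by positivity)]))
    Subsingleton.pairwise).2 0
  refine ofReal_one_sub_le_measure (F := {ω | (ζ ω ∩ T).Finite ∧ (ζ ω ∩ T).ncard < k})
    (Real.exp_nonneg _) (fun ω hω => ?_) ?_
  · by_contra hmany
    obtain ⟨F, hFT, hFk⟩ := Set.exists_finset_subset_card_eq_of_not_finite_ncard_lt hmany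
    obtain ⟨l, hl, hlen, hlF, hpath⟩ :=
      exists_pathLenR_lt_of_subset_tube _ F (hFT.trans Set.inter_subset_right) hFk
    exact hω ⟨l, hl, hlen, fun p hp => (hFT (hlF p hp)).1, hpath⟩
  · refine (measure_finite_ncard_lt_le _ (by positivity) hcount k).trans
      (ENNReal.ofReal_le_ofReal (Real.exp_le_exp.2 ?_))
    linarith

/-- for a Poisson point process `ζ` on `(0,1)^d` with intensity
`λ > 0` and `k ≤ (λ/4)^{1/d}`, with probability at least
`1 − exp(−(λ/4)^{1/d})` there exist `k` distinct points `Z₁,…,Z_k` of `ζ`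
such that the shortest ℓ¹ path from the origin visiting all of them has
length `< d` (i.e. `D₀(Z₁,…,Z_k) < d`). -/
theorem stmt15 (d : ℕ) (hd : 0 < d) (lam : ℝ) (hlam : 0 < lam)
    (k : ℕ) (hk : 0 < k) (hkle : (k : ℝ) ≤ (lam / 4) ^ ((1 : ℝ) / d))
    (Ω : Type*) [MeasurableSpace Ω] (P : Measure Ω) [IsProbabilityMeasure P]
    (ζ : Ω → Set (Fin d → ℝ))
    (hsupp : ∀ ω, ζ ω ⊆ {y | ∀ i, 0 < y i ∧ y i < 1})
    (hPPP : ∀ (n : ℕ) (A : Fin n → Set (Fin d → ℝ)),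
      (∀ i, MeasurableSet (A i)) →
      (∀ i, A i ⊆ {y | ∀ j, 0 < y j ∧ y j < 1}) →
      Pairwise (Function.onFun Disjoint A) →
      iIndepFun (fun i ω => (ζ ω ∩ A i).ncard) P ∧
      ∀ i, ∀ m : ℕ,
        P {ω | (ζ ω ∩ A i).Finite ∧ (ζ ω ∩ A i).ncard = m} =
          ENNReal.ofReal (Real.exp (-(lam * (volume (A i)).toReal)) *
            (lam * (volume (A i)).toReal) ^ m / m.factorial)) :
    ENNReal.ofReal (1 - Real.exp (-((lam / 4) ^ ((1 : ℝ) / d)))) ≤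
      P {ω | ∃ l : List (Fin d → ℝ), l.Nodup ∧ l.length = k ∧
        (∀ p ∈ l, p ∈ ζ ω) ∧ pathLenR d l < d} :=
  stmt15_general d hd lam hlam k hk hkle Ω P ζ hPPP
end
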